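/- arXiv:1410.5988 — 5 statements merged into one kernel-verified Lean document; each statement's English description precedes it below -/
import Mathlib

section
/- If P is an orthogonal projection on a Hilbert space H, g is a unitary operator on H, and gPg^{-1} - P is a compact operator, then the Toeplitz operator T = P g P, viewed as an operator from the range of P to itself, is Fredholm. -/
open ContinuousLinearMap

/-- A bounded operator is Fredholm if its kernel is finite dimensional and its
cokernel is finite dimensional. -/
def IsFredholmOp {E F : Type*} [NormedAddCommGroup E] [NormedSpace ℂ E]
    [NormedAddCommGroup F] [NormedSpace ℂ F] (T : E →L[ℂ] F) : Prop :=
  FiniteDimensional ℂ (LinearMap.ker (T : E →ₗ[ℂ] F)) ∧ FiniteDimensional ℂ (F ⧸ LinearMap.range (T : E →ₗ[ℂ] F))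

/-- The Toeplitz-type operator `P T P` viewed as an operator from `im P` to `im P`. -/
noncomputable def toeplitzOp {H : Type*} [NormedAddCommGroup H] [InnerProductSpace ℂ H]
    [CompleteSpace H] (P T : H →L[ℂ] H) :
    ↥(LinearMap.range (P : H →ₗ[ℂ] H)) →L[ℂ] ↥(LinearMap.range (P : H →ₗ[ℂ] H)) :=
  ((P.comp (T.comp (LinearMap.range (P : H →ₗ[ℂ] H)).subtypeL))).codRestrict (LinearMap.range (P : H →ₗ[ℂ] H))
    (fun x => LinearMap.mem_range_self (P : H →ₗ[ℂ] H) _)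

/-!
`T = PgP` has the parametrix `S = Pg⁻¹P` on `im P`: `TS - 1` and `ST - 1` are the compressions
of the compact operators `gPg⁻¹ - P` and `g⁻¹Pg - P = -g⁻¹(gPg⁻¹ - P)g`. Hence `ker T ⊆ ker (1 + K)`
and `range T ⊇ range (1 + L)` with `K`, `L` compact and `L` self-adjoint. The kernel of `1 + K` is
an eigenspace of a compact operator, so finite dimensional. For the range, let `p` be the
orthogonal projection onto `ker (1 + L)`: since `range (1 + L) ⟂ ker (1 + L)`, the operator
`1 + L + p` is injective, hence onto by the Fredholm alternative, so
`range (1 + L) + ker (1 + L)` is the whole space.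
-/

open scoped InnerProductSpace

theorem IsCompactOperator.surjective_one_add_of_injective {𝕜 X : Type*}
    [NontriviallyNormedField 𝕜] [NormedAddCommGroup X] [NormedSpace 𝕜 X] [CompleteSpace X]
    {K : X →L[𝕜] X} (hK : IsCompactOperator K) (hinj : Function.Injective ⇑(1 + K)) :
    Function.Surjective ⇑(1 + K) := by
  rcases hK.hasEigenvalue_or_mem_resolventSet (μ := (-1 : 𝕜)) (by norm_num) with hev | hres
  · obtain ⟨x, hx, hx0⟩ := hev.exists_hasEigenvector
    refine absurd (hinj ?_) hx0
    replace hx : K x = -x := by simpa using Module.End.mem_eigenspace_iff.mp hx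
    rw [map_zero, add_apply, hx]
    exact add_neg_cancel x
  · rw [spectrum.mem_resolventSet_iff, show algebraMap 𝕜 (X →L[𝕜] X) (-1) - K = -(1 + K) by
      simp only [map_neg, map_one]; abel, IsUnit.neg_iff, isUnit_iff_bijective] at hres
    exact hres.2

section

variable {𝕜 E : Type*} [RCLike 𝕜] [NormedAddCommGroup E] [InnerProductSpace 𝕜 E]

theorem LinearMap.IsSymmetric.injective_add_starProjection_ker {A : E →L[𝕜] E}
    (hA : (A : E →ₗ[𝕜] E).IsSymmetric) [A.ker.HasOrthogonalProjection] :
    Function.Injective ⇑(A + A.ker.starProjection) := by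
  rw [injective_iff_map_eq_zero]
  intro x hx
  replace hx : A x + A.ker.starProjection x = 0 := hx
  have hAx : A x ∈ A.ker ⊓ A.kerᗮ := by
    refine ⟨?_, ?_⟩
    · rw [eq_neg_of_add_eq_zero_left hx]
      exact A.ker.neg_mem (A.ker.starProjection_apply_mem x)
    · rw [← hA.orthogonal_range]
      exact Submodule.le_orthogonal_orthogonal _ (LinearMap.mem_range_self _ x)
  rw [Submodule.inf_orthogonal_eq_bot, Submodule.mem_bot] at hAx
  simpa [hAx, Submodule.starProjection_eq_self_iff.mpr (LinearMap.mem_ker.mpr hAx)] using hx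

theorem Submodule.isCompactOperator_starProjection (N : Submodule 𝕜 E) [FiniteDimensional 𝕜 N] :
    IsCompactOperator N.starProjection :=
  (isCompactOperator_of_locallyCompactSpace_dom N.orthogonalProjectionOnto).clm_comp N.subtypeL

variable [CompleteSpace E] {K : E →L[𝕜] E}

theorem IsCompactOperator.finiteDimensional_ker_one_add (hK : IsCompactOperator K) :
    FiniteDimensional 𝕜 (1 + K).ker := by
  have h := finite_dimensional_eigenspace hK (-1) (by norm_num)
  rwa [Module.End.eigenspace_def, neg_one_smul, sub_neg_eq_add, add_comm] at h

theorem IsCompactOperator.finiteDimensional_quotient_range_one_add (hK : IsCompactOperator K)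
    (hKsymm : (K : E →ₗ[𝕜] E).IsSymmetric) :
    FiniteDimensional 𝕜 (E ⧸ (1 + K).range) := by
  have := hK.finiteDimensional_ker_one_add
  set p := (1 + K).ker.starProjection
  have hinj : Function.Injective ⇑(1 + K + p) :=
    (LinearMap.IsSymmetric.id.add hKsymm).injective_add_starProjection_ker
  have hsurj : Function.Surjective ⇑(1 + K + p) := by
    rw [add_assoc] at hinj ⊢
    exact (hK.add (Submodule.isCompactOperator_starProjection _)).surjective_one_add_of_injective
      hinj
  let f := (1 + K).range.mkQ ∘ₗ (1 + K).ker.subtype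
  refine Module.Finite.of_surjective f fun q ↦ ?_
  obtain ⟨y, rfl⟩ := Submodule.mkQ_surjective _ q
  obtain ⟨x, rfl⟩ := hsurj y
  refine ⟨⟨p x, Submodule.starProjection_apply_mem _ x⟩, ?_⟩
  change Submodule.Quotient.mk (p x) = Submodule.Quotient.mk ((1 + K) x + p x)
  rw [Submodule.Quotient.eq, sub_add_cancel_right]
  exact neg_mem (LinearMap.mem_range_self _ x)

end

section

variable {𝕜 E F : Type*} [RCLike 𝕜] [NormedAddCommGroup E] [InnerProductSpace 𝕜 E]
  [NormedAddCommGroup F] [InnerProductSpace 𝕜 F] {T : E →L[𝕜] F} {S : F →L[𝕜] E}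

theorem ContinuousLinearMap.finiteDimensional_ker_of_isCompactOperator_comp_sub_one
    [CompleteSpace E] (hST : IsCompactOperator ⇑(S ∘L T - 1)) : FiniteDimensional 𝕜 T.ker := by
  have h := hST.finiteDimensional_ker_one_add
  rw [add_sub_cancel] at h
  exact Submodule.finiteDimensional_of_le (S₂ := (S ∘L T).ker)
    (LinearMap.ker_le_ker_comp (T : E →ₗ[𝕜] F) (S : F →ₗ[𝕜] E))

theorem ContinuousLinearMap.finiteDimensional_quotient_range_of_isCompactOperator_comp_sub_one
    [CompleteSpace F] (hTS : IsCompactOperator ⇑(T ∘L S - 1))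
    (hTS_symm : (T ∘L S : F →ₗ[𝕜] F).IsSymmetric) : FiniteDimensional 𝕜 (F ⧸ T.range) := by
  have h := hTS.finiteDimensional_quotient_range_one_add (hTS_symm.sub LinearMap.IsSymmetric.id)
  rw [add_sub_cancel] at h
  have hle : (T ∘L S).range ≤ T.range :=
    LinearMap.range_comp_le_range (S : F →ₗ[𝕜] E) (T : E →ₗ[𝕜] F)
  exact Module.Finite.of_surjective (Submodule.factor hle) (Submodule.factor_surjective hle)

end

theorem isFredholmOp_of_isCompactOperator_comp_sub_one {E F : Type*} [NormedAddCommGroup E]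
    [InnerProductSpace ℂ E] [CompleteSpace E] [NormedAddCommGroup F] [InnerProductSpace ℂ F]
    [CompleteSpace F] {T : E →L[ℂ] F} (S : F →L[ℂ] E) (hST : IsCompactOperator ⇑(S ∘L T - 1))
    (hTS : IsCompactOperator ⇑(T ∘L S - 1)) (hTS_symm : (T ∘L S : F →ₗ[ℂ] F).IsSymmetric) :
    IsFredholmOp T :=
  ⟨finiteDimensional_ker_of_isCompactOperator_comp_sub_one hST,
    finiteDimensional_quotient_range_of_isCompactOperator_comp_sub_one hTS hTS_symm⟩

theorem ContinuousLinearMap.IsIdempotentElem.apply_of_mem_range {R M : Type*} [Semiring R]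
    [TopologicalSpace M] [AddCommMonoid M] [Module R M] {p : M →L[R] M} (hp : IsIdempotentElem p)
    {x : M} (hx : x ∈ p.range) : p x = x :=
  (LinearMap.IsIdempotentElem.mem_range_iff hp.toLinearMap).mp hx

section Toeplitz

variable {H : Type*} [NormedAddCommGroup H] [InnerProductSpace ℂ H] [CompleteSpace H]
  {P : H →L[ℂ] H}

theorem toeplitzOp_mul_toeplitzOp (A B : H →L[ℂ] H) :
    toeplitzOp P A * toeplitzOp P B = toeplitzOp P (A * P * B) :=
  rfl

theorem toeplitzOp_sub (A B : H →L[ℂ] H) :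
    toeplitzOp P (A - B) = toeplitzOp P A - toeplitzOp P B := by
  ext x
  exact map_sub P (A x) (B x)

theorem IsIdempotentElem.toeplitzOp_self (hP : IsIdempotentElem P) : toeplitzOp P P = 1 := by
  ext x
  change P (P x) = x
  rw [hP.apply_of_mem_range x.2, hP.apply_of_mem_range x.2]

theorem IsCompactOperator.toeplitzOp (hP : IsIdempotentElem P) {A : H →L[ℂ] H}
    (hA : IsCompactOperator A) : IsCompactOperator (toeplitzOp P A) :=
  ((hA.comp_clm P.range.subtypeL).clm_comp P).codRestrict _ hP.isClosed_range

theorem IsSelfAdjoint.isSymmetric_toeplitzOp (hP : IsIdempotentElem P) (hPsa : IsSelfAdjoint P)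
    {A : H →L[ℂ] H} (hA : IsSelfAdjoint A) :
    (toeplitzOp P A : P.range →ₗ[ℂ] P.range).IsSymmetric := by
  intro x y
  have hPsymm := isSelfAdjoint_iff_isSymmetric.mp hPsa
  have hAsymm := isSelfAdjoint_iff_isSymmetric.mp hA
  change ⟪P (A x), (y : H)⟫_ℂ = ⟪(x : H), P (A y)⟫_ℂ
  calc ⟪P (A x), (y : H)⟫_ℂ = ⟪A x, P y⟫_ℂ := hPsymm _ _
    _ = ⟪A x, y⟫_ℂ := by rw [hP.apply_of_mem_range y.2]
    _ = ⟪(x : H), A y⟫_ℂ := hAsymm _ _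
    _ = ⟪P x, A y⟫_ℂ := by rw [hP.apply_of_mem_range x.2]
    _ = ⟪(x : H), P (A y)⟫_ℂ := hPsymm _ _

end Toeplitz

/-- If `P` is an orthogonal projection on a Hilbert space `H`, `g` is unitary and
`gPg⁻¹ - P` is compact, then the Toeplitz operator `PgP : im P → im P` is Fredholm. -/
theorem toeplitz_fredholm {H : Type*} [NormedAddCommGroup H] [InnerProductSpace ℂ H]
    [CompleteSpace H] (P g : H →L[ℂ] H)
    (hPsa : IsSelfAdjoint P) (hPidem : P.comp P = P)
    (hg : g ∈ unitary (H →L[ℂ] H))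
    (hcomp : IsCompactOperator ⇑(g * P * star g - P)) :
    IsFredholmOp (toeplitzOp P g) := by
  have hP : IsIdempotentElem P := hPidem
  have : CompleteSpace P.range := hP.isClosed_range.completeSpace_coe
  have hconj : star g * P * g - P = -(star g * (g * P * star g - P) * g) := by
    simp only [mul_sub, sub_mul, ← mul_assoc, Unitary.star_mul_self_of_mem hg, one_mul]
    simp only [mul_assoc, Unitary.star_mul_self_of_mem hg, mul_one, neg_sub]
  refine isFredholmOp_of_isCompactOperator_comp_sub_one (toeplitzOp P (star g)) ?_ ?_ ?_
  · change IsCompactOperator ⇑(toeplitzOp P (star g) * toeplitzOp P g - 1)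
    rw [toeplitzOp_mul_toeplitzOp, ← hP.toeplitzOp_self, ← toeplitzOp_sub, hconj]
    exact ((hcomp.comp_clm g).clm_comp (star g)).neg.toeplitzOp hP
  · change IsCompactOperator ⇑(toeplitzOp P g * toeplitzOp P (star g) - 1)
    rw [toeplitzOp_mul_toeplitzOp, ← hP.toeplitzOp_self, ← toeplitzOp_sub]
    exact hcomp.toeplitzOp hP
  · exact hPsa.isSymmetric_toeplitzOp hP (hPsa.conjugate g)
end

section
/- Fix real numbers λ, λᵢ and L > 0 with λᵢ² ≥ λ². Suppose f, f̃ : [0, L] → ℝ are continuously differentiable, satisfy f' + λᵢ f = λ f̃ and -f̃' + λᵢ f̃ = λ f on [0, L], and the boundary conditions f(0) + f̃(0) = 0 and f(L) + f̃(L) = 0. Then either f and f̃ are identically zero, or λ = -λᵢ, f is constant, and f̃ = -f. -/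
open Set

/-- Key lemma: if `u' = c₁ v`, `v' = c₂ u` on `[0,L]` with `c₁, c₂ ≥ 0` and
`u(0) = u(L) = 0`, then `u ≡ 0` and `v` is constant. -/
lemma cylinder_key (c1 c2 L : ℝ) (hL : 0 < L) (hc1 : 0 ≤ c1) (hc2 : 0 ≤ c2)
    (u v : ℝ → ℝ)
    (hu : ∀ x ∈ Icc (0 : ℝ) L, HasDerivWithinAt u (c1 * v x) (Icc (0 : ℝ) L) x)
    (hv : ∀ x ∈ Icc (0 : ℝ) L, HasDerivWithinAt v (c2 * u x) (Icc (0 : ℝ) L) x)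
    (h0 : u 0 = 0) (hLe : u L = 0) :
    (∀ x ∈ Icc (0 : ℝ) L, u x = 0) ∧ (∀ x ∈ Icc (0 : ℝ) L, v x = v 0) := by
  have h0m : (0 : ℝ) ∈ Icc (0 : ℝ) L := ⟨le_refl _, hL.le⟩
  have hLm : L ∈ Icc (0 : ℝ) L := ⟨hL.le, le_refl _⟩
  -- derivative of the product P = u * v
  have hP : ∀ x ∈ Icc (0 : ℝ) L, HasDerivWithinAt (fun y => u y * v y)
      (c1 * v x * v x + c2 * u x * u x) (Icc (0 : ℝ) L) x := by
    intro x hx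
    have h := (hu x hx).mul (hv x hx)
    have e : c1 * v x * v x + u x * (c2 * u x) = c1 * v x * v x + c2 * u x * u x := by ring
    exact e ▸ h
  have hcont : ContinuousOn (fun y => u y * v y) (Icc (0 : ℝ) L) :=
    fun x hx => (hP x hx).continuousWithinAt
  have hmono : MonotoneOn (fun y => u y * v y) (Icc (0 : ℝ) L) := by
    apply monotoneOn_of_deriv_nonneg (convex_Icc 0 L) hcont
    · intro x hx
      rw [interior_Icc] at hx
      exact ((hP x (Ioo_subset_Icc_self hx)).hasDerivAt
        (Icc_mem_nhds hx.1 hx.2)).differentiableAt.differentiableWithinAt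
    · intro x hx
      rw [interior_Icc] at hx
      have hd := ((hP x (Ioo_subset_Icc_self hx)).hasDerivAt (Icc_mem_nhds hx.1 hx.2)).deriv
      rw [hd]
      nlinarith [mul_self_nonneg (v x), mul_self_nonneg (u x)]
  -- P vanishes identically
  have hPz : ∀ x ∈ Icc (0 : ℝ) L, u x * v x = 0 := by
    intro x hx
    have h1 : u 0 * v 0 ≤ u x * v x := hmono h0m hx hx.1
    have h2 : u x * v x ≤ u L * v L := hmono hx hLm hx.2
    rw [h0] at h1; rw [hLe] at h2
    simp at h1 h2
    linarith
  -- hence its derivative vanishes, so each (nonnegative) term vanishes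
  have hterm : ∀ x ∈ Icc (0 : ℝ) L, c1 * v x = 0 ∧ c2 * u x = 0 := by
    intro x hx
    have hzero : HasDerivWithinAt (fun y => u y * v y) 0 (Icc (0 : ℝ) L) x :=
      (hasDerivWithinAt_const x (Icc (0 : ℝ) L) (0 : ℝ)).congr hPz (hPz x hx)
    have hud : UniqueDiffWithinAt ℝ (Icc (0 : ℝ) L) x := (uniqueDiffOn_Icc hL) x hx
    have e1 := (hP x hx).derivWithin hud
    have e2 := hzero.derivWithin hud
    have hsum : c1 * v x * v x + c2 * u x * u x = 0 := by rw [e1] at e2; exact e2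
    have t1 : 0 ≤ c1 * v x * v x := by nlinarith [mul_self_nonneg (v x)]
    have t2 : 0 ≤ c2 * u x * u x := by nlinarith [mul_self_nonneg (u x)]
    have t1' : c1 * v x * v x = 0 := by linarith
    have t2' : c2 * u x * u x = 0 := by linarith
    constructor
    · rcases mul_eq_zero.mp t1' with h | h
      · exact h
      · rw [h, mul_zero]
    · rcases mul_eq_zero.mp t2' with h | h
      · exact h
      · rw [h, mul_zero]
  -- u has zero derivative, so is constant (= 0); similarly v is constant
  have hu0 : ∀ x ∈ Icc (0 : ℝ) L, HasDerivWithinAt u 0 (Icc (0 : ℝ) L) x :=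
    fun x hx => (hterm x hx).1 ▸ hu x hx
  have huconst : ∀ x ∈ Icc (0 : ℝ) L, u x = 0 := by
    intro x hx
    have := (convex_Icc (0 : ℝ) L).norm_image_sub_le_of_norm_hasDerivWithin_le
      (C := 0) hu0 (fun y hy => by simp) h0m hx
    rw [zero_mul, h0, sub_zero, norm_le_zero_iff] at this
    exact this
  refine ⟨huconst, ?_⟩
  have hv0 : ∀ x ∈ Icc (0 : ℝ) L, HasDerivWithinAt v 0 (Icc (0 : ℝ) L) x :=
    fun x hx => (hterm x hx).2 ▸ hv x hx
  intro x hx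
  have := (convex_Icc (0 : ℝ) L).norm_image_sub_le_of_norm_hasDerivWithin_le
    (C := 0) hv0 (fun y hy => by simp) h0m hx
  rw [zero_mul, norm_le_zero_iff, sub_eq_zero] at this
  exact this

/-- On `[0, L]`, suppose `f' + λᵢ f = λ f̃`, `-f̃' + λᵢ f̃ = λ f`, with boundary conditions
`f(0) + f̃(0) = 0` and `f(L) + f̃(L) = 0`, and `λᵢ² ≥ λ²`. Then either `f` and `f̃` vanish
identically, or `λ = -λᵢ`, `f` is constant and `f̃ = -f`. -/
theorem cylinder_eigenfunctions_small_eigenvalue (lam lami L : ℝ) (hL : 0 < L)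
    (hsq : lam ^ 2 ≤ lami ^ 2) (f ft : ℝ → ℝ)
    (hf : ∀ x ∈ Icc (0 : ℝ) L,
      HasDerivWithinAt f (lam * ft x - lami * f x) (Icc (0 : ℝ) L) x)
    (hft : ∀ x ∈ Icc (0 : ℝ) L,
      HasDerivWithinAt ft (lami * ft x - lam * f x) (Icc (0 : ℝ) L) x)
    (hb0 : f 0 + ft 0 = 0) (hbL : f L + ft L = 0) :
    (∀ x ∈ Icc (0 : ℝ) L, f x = 0 ∧ ft x = 0) ∨
    (lam = -lami ∧ (∀ x ∈ Icc (0 : ℝ) L, f x = f 0) ∧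
      ∀ x ∈ Icc (0 : ℝ) L, ft x = - f x) := by
  have h0m : (0 : ℝ) ∈ Icc (0 : ℝ) L := ⟨le_refl _, hL.le⟩
  set u : ℝ → ℝ := fun y => f y + ft y with hu_def
  set v : ℝ → ℝ := fun y => ft y - f y with hv_def
  have hu : ∀ x ∈ Icc (0 : ℝ) L,
      HasDerivWithinAt u ((lam + lami) * v x) (Icc (0 : ℝ) L) x := by
    intro x hx
    have h := (hf x hx).add (hft x hx)
    have e : lam * ft x - lami * f x + (lami * ft x - lam * f x)
        = (lam + lami) * v x := by simp only [hv_def]; ring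
    exact e ▸ h
  have hv : ∀ x ∈ Icc (0 : ℝ) L,
      HasDerivWithinAt v ((lami - lam) * u x) (Icc (0 : ℝ) L) x := by
    intro x hx
    have h := (hft x hx).sub (hf x hx)
    have e : lami * ft x - lam * f x - (lam * ft x - lami * f x)
        = (lami - lam) * u x := by simp only [hu_def]; ring
    exact e ▸ h
  have hu0 : u 0 = 0 := hb0
  have huL : u L = 0 := hbL
  -- get u ≡ 0, v constant, splitting on the sign of lami
  have key : (∀ x ∈ Icc (0 : ℝ) L, u x = 0) ∧ (∀ x ∈ Icc (0 : ℝ) L, v x = v 0) := by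
    rcases le_total 0 lami with hlami | hlami
    · have hc1 : 0 ≤ lam + lami := by nlinarith
      have hc2 : 0 ≤ lami - lam := by nlinarith
      exact cylinder_key _ _ L hL hc1 hc2 u v hu hv hu0 huL
    · have hc1 : 0 ≤ -(lam + lami) := by nlinarith
      have hc2 : 0 ≤ -(lami - lam) := by nlinarith
      have hu' : ∀ x ∈ Icc (0 : ℝ) L,
          HasDerivWithinAt u (-(lam + lami) * (fun y => -v y) x) (Icc (0 : ℝ) L) x := by
        intro x hx
        have e : (lam + lami) * v x = -(lam + lami) * (fun y => -v y) x := by simp; ring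
        exact e ▸ hu x hx
      have hv' : ∀ x ∈ Icc (0 : ℝ) L,
          HasDerivWithinAt (fun y => -v y) (-(lami - lam) * u x) (Icc (0 : ℝ) L) x := by
        intro x hx
        have h := (hv x hx).neg
        have e : -((lami - lam) * u x) = -(lami - lam) * u x := by ring
        exact e ▸ h
      have := cylinder_key _ _ L hL hc1 hc2 u (fun y => -v y) hu' hv' hu0 huL
      exact ⟨this.1, fun x hx => by have := this.2 x hx; simp at this; linarith⟩
  obtain ⟨hu_zero, hv_const⟩ := key
  -- translate: ft = -f and f constant on [0,L]
  have hft_eq : ∀ x ∈ Icc (0 : ℝ) L, ft x = -f x := by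
    intro x hx
    have := hu_zero x hx
    simp only [hu_def] at this
    linarith
  have hf_const : ∀ x ∈ Icc (0 : ℝ) L, f x = f 0 := by
    intro x hx
    have h1 := hv_const x hx
    simp only [hv_def] at h1
    have h2 := hft_eq x hx
    have h3 : ft 0 = -f 0 := hft_eq 0 h0m
    linarith
  by_cases hf0 : f 0 = 0
  · left
    intro x hx
    have h1 : f x = 0 := by rw [hf_const x hx, hf0]
    exact ⟨h1, by rw [hft_eq x hx, h1, neg_zero]⟩
  · right
    -- f is constant, so its derivative at 0 is 0, forcing lam + lami = 0
    have hconst : HasDerivWithinAt f 0 (Icc (0 : ℝ) L) 0 :=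
      (hasDerivWithinAt_const 0 (Icc (0 : ℝ) L) (f 0)).congr hf_const (hf_const 0 h0m)
    have hud : UniqueDiffWithinAt ℝ (Icc (0 : ℝ) L) 0 := (uniqueDiffOn_Icc hL) 0 h0m
    have e1 := (hf 0 h0m).derivWithin hud
    have e2 := hconst.derivWithin hud
    have hzero : lam * ft 0 - lami * f 0 = 0 := by rw [e1] at e2; exact e2
    have hft0 : ft 0 = -f 0 := hft_eq 0 h0m
    rw [hft0] at hzero
    have hsum : (lam + lami) * f 0 = 0 := by linarith [hzero]; 
    have hlam : lam = -lami := by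
      rcases mul_eq_zero.mp hsum with h | h
      · linarith
      · exact absurd h hf0
    exact ⟨hlam, hf_const, hft_eq⟩
end

section
/- Fix real numbers λ, λᵢ and L > 0 with λᵢ² < λ². Suppose f, f̃ : [0, L] → ℝ are continuously differentiable, satisfy f' + λᵢ f = λ f̃ and -f̃' + λᵢ f̃ = λ f on [0, L], f(0) + f̃(0) = 0, f(L) + f̃(L) = 0, and f + f̃ is not identically zero. Then there exists a nonzero integer n such that λᵢ² - λ² = -n²π²/L². -/
open Set Real

/-!
With `u = f + f̃` and `g = (λ + λᵢ)(f̃ - f)` the system becomes `u' = g`, `g' = -μ² u`, where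
`μ² = λ² - λᵢ² > 0`; hence `u = u(0) cos μx + (g(0)/μ) sin μx`. Since `u(0) = 0` and `u ≢ 0`,
the condition `u(L) = 0` forces `sin μL = 0`, i.e. `μL ∈ πℤ \ {0}`.
-/

theorem eq_left_of_hasDerivWithinAt_zero {F : ℝ → ℝ} {a b : ℝ}
    (h : ∀ x ∈ Icc a b, HasDerivWithinAt F 0 (Icc a b) x) :
    ∀ x ∈ Icc a b, F x = F a :=
  constant_of_has_deriv_right_zero (fun x hx => (h x hx).continuousWithinAt) fun x hx =>
    (h x (Ico_subset_Icc_self hx)).mono_of_mem_nhdsWithin (Icc_mem_nhdsGE_of_mem hx)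

section Harmonic

variable {u g : ℝ → ℝ} {μ : ℝ}

theorem hasDerivWithinAt_mul_cos_sub_div_mul_sin {s : Set ℝ} {x : ℝ} (hμ : μ ≠ 0)
    (hu : HasDerivWithinAt u (g x) s x) (hg : HasDerivWithinAt g (-(μ ^ 2) * u x) s x) :
    HasDerivWithinAt (fun y => u y * cos (μ * y) - g y / μ * sin (μ * y)) 0 s x := by
  have hμx : HasDerivAt (fun y => μ * y) μ x := by simpa using (hasDerivAt_id x).const_mul μ
  refine ((hu.mul hμx.cos.hasDerivWithinAt).sub
    ((hg.div_const μ).mul hμx.sin.hasDerivWithinAt)).congr_deriv ?_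
  field_simp
  ring

theorem hasDerivWithinAt_mul_sin_add_div_mul_cos {s : Set ℝ} {x : ℝ} (hμ : μ ≠ 0)
    (hu : HasDerivWithinAt u (g x) s x) (hg : HasDerivWithinAt g (-(μ ^ 2) * u x) s x) :
    HasDerivWithinAt (fun y => u y * sin (μ * y) + g y / μ * cos (μ * y)) 0 s x := by
  have hμx : HasDerivAt (fun y => μ * y) μ x := by simpa using (hasDerivAt_id x).const_mul μ
  refine ((hu.mul hμx.sin.hasDerivWithinAt).add
    ((hg.div_const μ).mul hμx.cos.hasDerivWithinAt)).congr_deriv ?_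
  field_simp
  ring

/-- The two conserved quantities above are the coordinates of `(u, g/μ)` in the frame rotating
by the angle `μx`; rotating back recovers `u`. -/
theorem eq_mul_cos_add_div_mul_sin_of_hasDerivWithinAt {L : ℝ} (hμ : μ ≠ 0)
    (hu : ∀ x ∈ Icc 0 L, HasDerivWithinAt u (g x) (Icc 0 L) x)
    (hg : ∀ x ∈ Icc 0 L, HasDerivWithinAt g (-(μ ^ 2) * u x) (Icc 0 L) x) :
    ∀ x ∈ Icc 0 L, u x = u 0 * cos (μ * x) + g 0 / μ * sin (μ * x) := by
  intro x hx
  have hA := eq_left_of_hasDerivWithinAt_zero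
    (fun y hy => hasDerivWithinAt_mul_cos_sub_div_mul_sin hμ (hu y hy) (hg y hy)) x hx
  have hB := eq_left_of_hasDerivWithinAt_zero
    (fun y hy => hasDerivWithinAt_mul_sin_add_div_mul_cos hμ (hu y hy) (hg y hy)) x hx
  simp only [mul_zero, cos_zero, sin_zero, mul_one, sub_zero, zero_add] at hA hB
  linear_combination cos (μ * x) * hA + sin (μ * x) * hB - u x * sin_sq_add_cos_sq (μ * x)

end Harmonic

theorem exists_int_ne_zero_sq_eq_of_sin_mul_eq_zero {μ L : ℝ} (hμ : 0 < μ) (hL : 0 < L)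
    (h : sin (μ * L) = 0) : ∃ n : ℤ, n ≠ 0 ∧ μ ^ 2 = (n : ℝ) ^ 2 * π ^ 2 / L ^ 2 := by
  obtain ⟨n, hn⟩ := sin_eq_zero_iff.1 h
  refine ⟨n, ?_, ?_⟩
  · rintro rfl
    simp only [Int.cast_zero, zero_mul] at hn
    nlinarith
  · rw [eq_div_iff (by positivity), ← mul_pow, ← mul_pow, ← hn]

/-- On `[0, L]`, suppose `f' + λᵢ f = λ f̃`, `-f̃' + λᵢ f̃ = λ f`, with boundary conditions
`f(0) + f̃(0) = 0`, `f(L) + f̃(L) = 0`, `λᵢ² < λ²`, and `f + f̃` not identically zero.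
Then `λᵢ² - λ² = -n²π²/L²` for some nonzero integer `n`. -/
theorem cylinder_eigenvalue_quantization (lam lami L : ℝ) (hL : 0 < L)
    (hsq : lami ^ 2 < lam ^ 2) (f ft : ℝ → ℝ)
    (hf : ∀ x ∈ Icc (0 : ℝ) L,
      HasDerivWithinAt f (lam * ft x - lami * f x) (Icc (0 : ℝ) L) x)
    (hft : ∀ x ∈ Icc (0 : ℝ) L,
      HasDerivWithinAt ft (lami * ft x - lam * f x) (Icc (0 : ℝ) L) x)
    (hb0 : f 0 + ft 0 = 0) (hbL : f L + ft L = 0)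
    (hne : ¬ ∀ x ∈ Icc (0 : ℝ) L, f x + ft x = 0) :
    ∃ n : ℤ, n ≠ 0 ∧ lami ^ 2 - lam ^ 2 = -((n : ℝ) ^ 2 * Real.pi ^ 2 / L ^ 2) := by
  set μ := √(lam ^ 2 - lami ^ 2)
  have hμsq : μ ^ 2 = lam ^ 2 - lami ^ 2 := sq_sqrt (by linarith)
  have hμ : 0 < μ := sqrt_pos.2 (by linarith)
  have hu : ∀ x ∈ Icc (0 : ℝ) L, HasDerivWithinAt (fun y => f y + ft y)
      ((fun y => (lam + lami) * (ft y - f y)) x) (Icc (0 : ℝ) L) x := fun x hx =>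
    ((hf x hx).add (hft x hx)).congr_deriv (by ring)
  have hg : ∀ x ∈ Icc (0 : ℝ) L, HasDerivWithinAt (fun y => (lam + lami) * (ft y - f y))
      (-(μ ^ 2) * (f x + ft x)) (Icc (0 : ℝ) L) x := fun x hx =>
    (((hft x hx).sub (hf x hx)).const_mul (lam + lami)).congr_deriv
      (by linear_combination (f x + ft x) * hμsq)
  have hsol := eq_mul_cos_add_div_mul_sin_of_hasDerivWithinAt hμ.ne' hu hg
  simp only [hb0, zero_mul, zero_add] at hsol
  have hsinL : sin (μ * L) = 0 := by
    refine (mul_eq_zero.1 ((hsol L ⟨hL.le, le_rfl⟩).symm.trans hbL)).resolve_left fun hc => ?_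
    exact hne fun x hx => by rw [hsol x hx, hc, zero_mul]
  obtain ⟨n, hn, hμn⟩ := exists_int_ne_zero_sq_eq_of_sin_mul_eq_zero hμ hL hsinL
  exact ⟨n, hn, by linarith⟩
end

section
/- Let H be a complex Hilbert space and D : dom(D) ⊆ H → H a self-adjoint operator. Suppose dom(D) decomposes as an internal direct sum of two D-invariant subspaces V₀ ⊕ V₁ whose closures give an orthogonal decomposition H = H₀ ⊕ H₁, and suppose D restricted to V₁ (as an operator on H₁) is bijective onto H₁ with bounded inverse. Then 0 is in the spectrum of D if and only if 0 is in the spectrum of the restriction of D to V₀ (as an operator on H₀), and ker(D) = ker(D|_{V₀}). -/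
/-!
Split `s ∈ dom D` as `s₀ + s₁` with `sᵢ ∈ Vᵢ`. Invariance puts `D sᵢ` in the closure `Hᵢ`, and the
closures are orthogonal, so `D s = D s₀ + D s₁` is an orthogonal decomposition of `D s`. Hence
`D s ∈ H₀` forces `D s₁ = 0`, which for `s₁ ∈ V₁` forces `s₁ = 0`; this gives the kernel statement
and transfers regularity from `D` to `D|V₀`. Conversely, preimages and a-priori bounds on the two
pieces add up, since `‖D sᵢ‖ ≤ ‖D s‖` by Pythagoras.
-/

/-- `0` is a regular point for the (unbounded) operator `D` restricted to the subspace `V`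
of its domain, viewed as an operator on the Hilbert space `closure V`: the restriction is
surjective onto `closure V` and has a bounded inverse. For `V = ⊤` this says `0 ∉ spec D`. -/
def ZeroRegularOn {H : Type*} [NormedAddCommGroup H] [InnerProductSpace ℂ H]
    [CompleteSpace H] (D : H →ₗ.[ℂ] H) (V : Submodule ℂ H) : Prop :=
  (∀ y ∈ V.topologicalClosure, ∃ s : D.domain, (s : H) ∈ V ∧ D s = y) ∧
  ∃ C : ℝ, 0 < C ∧ ∀ s : D.domain, (s : H) ∈ V → ‖(s : H)‖ ≤ C * ‖D s‖

open Submodule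

theorem Submodule.IsOrtho.topologicalClosure {𝕜 E : Type*} [RCLike 𝕜] [NormedAddCommGroup E]
    [InnerProductSpace 𝕜 E] {U V : Submodule 𝕜 E} (h : U ⟂ V) :
    U.topologicalClosure ⟂ V.topologicalClosure := by
  rw [isOrtho_iff_le, orthogonal_closure]
  exact topologicalClosure_minimal _ h.le (isClosed_orthogonal _)

theorem Submodule.IsOrtho.eq_zero_of_add_mem_left {𝕜 E : Type*} [RCLike 𝕜]
    [NormedAddCommGroup E] [InnerProductSpace 𝕜 E] {U V : Submodule 𝕜 E} (h : U ⟂ V)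
    {x y : E} (hx : x ∈ U) (hy : y ∈ V) (hxy : x + y ∈ U) : y = 0 := by
  have hyU : y ∈ U := by simpa using U.sub_mem hxy hx
  exact (disjoint_def.1 h.disjoint) y hyU hy

theorem norm_le_norm_add_of_inner_eq_zero {𝕜 E : Type*} [RCLike 𝕜] [NormedAddCommGroup E]
    [InnerProductSpace 𝕜 E] {x y : E} (h : (inner 𝕜 x y : 𝕜) = 0) : ‖x‖ ≤ ‖x + y‖ := by
  have hpyth := norm_add_sq_eq_norm_sq_add_norm_sq_of_inner_eq_zero x y h
  exact (sq_le_sq₀ (norm_nonneg _) (norm_nonneg _)).1 (by nlinarith [sq_nonneg ‖y‖])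

theorem Submodule.exists_add_eq_of_sup_eq {R M : Type*} [Ring R] [AddCommGroup M] [Module R M]
    {P V₀ V₁ : Submodule R M} (hsum : V₀ ⊔ V₁ = P) (s : P) :
    ∃ s₀ s₁ : P, (s₀ : M) ∈ V₀ ∧ (s₁ : M) ∈ V₁ ∧ s₀ + s₁ = s := by
  obtain ⟨a, ha, b, hb, hab⟩ := mem_sup.1 (hsum ▸ s.2 : (s : M) ∈ V₀ ⊔ V₁)
  exact ⟨⟨a, hsum ▸ mem_sup_left ha⟩, ⟨b, hsum ▸ mem_sup_right hb⟩, ha, hb, Subtype.ext hab⟩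

section Splitting

variable {H : Type*} [NormedAddCommGroup H] [InnerProductSpace ℂ H]
  {D : H →ₗ.[ℂ] H} {V₀ V₁ : Submodule ℂ H}

theorem LinearPMap.exists_split_of_apply_mem_closure (hsum : V₀ ⊔ V₁ = D.domain)
    (horth : V₀ ⟂ V₁) (hinv0 : ∀ s : D.domain, (s : H) ∈ V₀ → D s ∈ V₀.topologicalClosure)
    (hinv1 : ∀ s : D.domain, (s : H) ∈ V₁ → D s ∈ V₁.topologicalClosure) (s : D.domain)
    (hs : D s ∈ V₀.topologicalClosure) :
    ∃ s₀ s₁ : D.domain, (s₀ : H) ∈ V₀ ∧ (s₁ : H) ∈ V₁ ∧ s₀ + s₁ = s ∧ D s₁ = 0 := by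
  obtain ⟨s₀, s₁, hs₀, hs₁, rfl⟩ := exists_add_eq_of_sup_eq hsum s
  rw [D.map_add] at hs
  exact ⟨s₀, s₁, hs₀, hs₁, rfl,
    horth.topologicalClosure.eq_zero_of_add_mem_left (hinv0 s₀ hs₀) (hinv1 s₁ hs₁) hs⟩

variable [CompleteSpace H]

theorem ZeroRegularOn.eq_zero_of_apply_eq_zero (hreg : ZeroRegularOn D V₀) {s : D.domain}
    (hs : (s : H) ∈ V₀) (hDs : D s = 0) : (s : H) = 0 := by
  obtain ⟨-, C, -, hC⟩ := hreg
  simpa [hDs] using hC s hs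

theorem ZeroRegularOn.of_top (hsum : V₀ ⊔ V₁ = D.domain) (horth : V₀ ⟂ V₁)
    (hinv0 : ∀ s : D.domain, (s : H) ∈ V₀ → D s ∈ V₀.topologicalClosure)
    (hinv1 : ∀ s : D.domain, (s : H) ∈ V₁ → D s ∈ V₁.topologicalClosure)
    (hreg : ZeroRegularOn D ⊤) : ZeroRegularOn D V₀ := by
  obtain ⟨hsurj, C, hC, hbound⟩ := hreg
  refine ⟨fun y hy => ?_, C, hC, fun s _ => hbound s trivial⟩
  obtain ⟨s, -, rfl⟩ := hsurj y (le_topologicalClosure _ mem_top)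
  obtain ⟨s₀, s₁, hs₀, -, rfl, hDs₁⟩ :=
    D.exists_split_of_apply_mem_closure hsum horth hinv0 hinv1 s hy
  exact ⟨s₀, hs₀, by rw [D.map_add, hDs₁, add_zero]⟩

theorem ZeroRegularOn.top_of_sup (hsum : V₀ ⊔ V₁ = D.domain) (horth : V₀ ⟂ V₁)
    (hdense : V₀.topologicalClosure ⊔ V₁.topologicalClosure = ⊤)
    (hinv0 : ∀ s : D.domain, (s : H) ∈ V₀ → D s ∈ V₀.topologicalClosure)
    (hinv1 : ∀ s : D.domain, (s : H) ∈ V₁ → D s ∈ V₁.topologicalClosure)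
    (hreg0 : ZeroRegularOn D V₀) (hreg1 : ZeroRegularOn D V₁) : ZeroRegularOn D ⊤ := by
  obtain ⟨hsurj0, C₀, hC₀, hbound0⟩ := hreg0
  obtain ⟨hsurj1, C₁, hC₁, hbound1⟩ := hreg1
  refine ⟨fun y _ => ?_, C₀ + C₁, by positivity, fun s _ => ?_⟩
  · obtain ⟨y₀, hy₀, y₁, hy₁, rfl⟩ := mem_sup.1 (hdense ▸ mem_top : y ∈ _ ⊔ _)
    obtain ⟨s₀, -, rfl⟩ := hsurj0 y₀ hy₀
    obtain ⟨s₁, -, rfl⟩ := hsurj1 y₁ hy₁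
    exact ⟨s₀ + s₁, trivial, D.map_add s₀ s₁⟩
  · obtain ⟨s₀, s₁, hs₀, hs₁, rfl⟩ := exists_add_eq_of_sup_eq hsum s
    have hperp : (inner ℂ (D s₀) (D s₁) : ℂ) = 0 :=
      horth.topologicalClosure.inner_eq (hinv0 s₀ hs₀) (hinv1 s₁ hs₁)
    have hle0 : ‖D s₀‖ ≤ ‖D (s₀ + s₁)‖ := D.map_add s₀ s₁ ▸ norm_le_norm_add_of_inner_eq_zero hperp
    have hle1 : ‖D s₁‖ ≤ ‖D (s₀ + s₁)‖ := by
      rw [D.map_add, add_comm]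
      exact norm_le_norm_add_of_inner_eq_zero (inner_eq_zero_symm.1 hperp)
    calc ‖((s₀ + s₁ : D.domain) : H)‖ ≤ ‖(s₀ : H)‖ + ‖(s₁ : H)‖ := norm_add_le _ _
      _ ≤ C₀ * ‖D s₀‖ + C₁ * ‖D s₁‖ := add_le_add (hbound0 s₀ hs₀) (hbound1 s₁ hs₁)
      _ ≤ (C₀ + C₁) * ‖D (s₀ + s₁)‖ := by
        rw [add_mul]
        gcongr

end Splitting

theorem zero_spectrum_splitting_general {H : Type*} [NormedAddCommGroup H] [InnerProductSpace ℂ H]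
    [CompleteSpace H] (D : H →ₗ.[ℂ] H)
    (V₀ V₁ : Submodule ℂ H)
    (hsum : V₀ ⊔ V₁ = D.domain)
    (horth : ∀ x ∈ V₀, ∀ y ∈ V₁, (inner ℂ x y : ℂ) = 0)
    (hdense : V₀.topologicalClosure ⊔ V₁.topologicalClosure = ⊤)
    (hinv0 : ∀ s : D.domain, (s : H) ∈ V₀ → D s ∈ V₀.topologicalClosure)
    (hinv1 : ∀ s : D.domain, (s : H) ∈ V₁ → D s ∈ V₁.topologicalClosure)
    (hreg1 : ZeroRegularOn D V₁) :
    (¬ ZeroRegularOn D ⊤ ↔ ¬ ZeroRegularOn D V₀) ∧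
    ∀ s : D.domain, D s = 0 → (s : H) ∈ V₀ := by
  have hortho : V₀ ⟂ V₁ := isOrtho_iff_inner_eq.2 horth
  refine ⟨not_congr ⟨ZeroRegularOn.of_top hsum hortho hinv0 hinv1,
    fun hreg0 => hreg0.top_of_sup hsum hortho hdense hinv0 hinv1 hreg1⟩, fun s hDs => ?_⟩
  obtain ⟨s₀, s₁, hs₀, hs₁, rfl, hDs₁⟩ :=
    D.exists_split_of_apply_mem_closure hsum hortho hinv0 hinv1 s (hDs ▸ zero_mem _)
  rw [coe_add, hreg1.eq_zero_of_apply_eq_zero hs₁ hDs₁, add_zero]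
  exact hs₀

/-- Splitting principle: if a self-adjoint operator `D` decomposes along an orthogonal
decomposition `dom D = V₀ ⊕ V₁` into `D`-invariant pieces, and `D` restricted to `V₁` is
bijective onto `H₁ = closure V₁` with bounded inverse, then `0 ∈ spec D` iff
`0 ∈ spec (D|_{V₀})`, and `ker D = ker (D|_{V₀})`. -/
theorem zero_spectrum_splitting {H : Type*} [NormedAddCommGroup H] [InnerProductSpace ℂ H]
    [CompleteSpace H] (D : H →ₗ.[ℂ] H) (hsa : D.adjoint = D)
    (V₀ V₁ : Submodule ℂ H) (hV₀ : V₀ ≤ D.domain) (hV₁ : V₁ ≤ D.domain)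
    (hsum : V₀ ⊔ V₁ = D.domain) (hdisj : V₀ ⊓ V₁ = ⊥)
    (horth : ∀ x ∈ V₀, ∀ y ∈ V₁, (inner ℂ x y : ℂ) = 0)
    (hdense : V₀.topologicalClosure ⊔ V₁.topologicalClosure = ⊤)
    (hinv0 : ∀ s : D.domain, (s : H) ∈ V₀ → D s ∈ V₀.topologicalClosure)
    (hinv1 : ∀ s : D.domain, (s : H) ∈ V₁ → D s ∈ V₁.topologicalClosure)
    (hreg1 : ZeroRegularOn D V₁) :
    (¬ ZeroRegularOn D ⊤ ↔ ¬ ZeroRegularOn D V₀) ∧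
    ∀ s : D.domain, D s = 0 → (s : H) ∈ V₀ :=
  zero_spectrum_splitting_general D V₀ V₁ hsum horth hdense hinv0 hinv1 hreg1
end

section
/- Let H be a complex Hilbert space, P an orthogonal projection on H, and g, h unitary operators on H such that gPg⁻¹ - P and hPh⁻¹ - P are compact. Then (gh)P(gh)⁻¹ - P is compact, and ind(P(gh)P : im P → im P) = ind(PgP : im P → im P) + ind(PhP : im P → im P), where ind denotes the Fredholm index. -/
open ContinuousLinearMap

/-- The Fredholm index of a bounded operator: `dim ker - dim coker`. -/
noncomputable def fredholmIndex {E F : Type*} [NormedAddCommGroup E] [NormedSpace ℂ E]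
    [NormedAddCommGroup F] [NormedSpace ℂ F] (T : E →L[ℂ] F) : ℤ :=
  (Module.finrank ℂ (LinearMap.ker (T : E →ₗ[ℂ] F)) : ℤ) - Module.finrank ℂ (F ⧸ LinearMap.range (T : E →ₗ[ℂ] F))

/-!
Write `τ u` for the compression of `u` to `im P`. Since `P x = x` on `im P`,
`τ a * τ b - τ (a * b)` is the compression of `P a (P b - b P)`, hence compact as soon as the
commutator `[P, b]` is; for a unitary `u`, compactness of `u P u⋆ - P` makes `[P, u]` and
`[P, u⋆]` compact. So `τ u⋆` inverts `τ u` modulo compact operators, and `τ (g h)` is a compact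
perturbation of `τ g * τ h`.

On a Hilbert space a compact `K` is within distance `< 1` of a finite-rank operator `A`, so
`1 + K` is an invertible operator plus `A` and has index `0`. Consequently an operator `T` with
an inverse `S` modulo compacts is Fredholm with `ind S + ind T = ind (S T) = 0`, which makes the
index invariant under compact perturbations; additivity of the index under composition then
gives `ind τ (g h) = ind (τ g * τ h) = ind τ g + ind τ h`.
-/

open Submodule Metric

namespace LinearMap

variable {k M N P : Type*} [DivisionRing k] [AddCommGroup M] [Module k M] [AddCommGroup N]
  [Module k N] [AddCommGroup P] [Module k P]

/-- Fredholm in the algebraic sense only: unlike `ContinuousLinearMap.IsFredholm`, neither a closed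
range nor a complemented kernel is required. -/
structure IsAlgFredholm (f : M →ₗ[k] N) : Prop where
  finiteDimensional_ker : FiniteDimensional k (ker f)
  finiteDimensional_coker : FiniteDimensional k (N ⧸ range f)

theorem IsAlgFredholm.index_comp {f : M →ₗ[k] N} {g : N →ₗ[k] P} (hf : f.IsAlgFredholm)
    (hg : g.IsAlgFredholm) : (g ∘ₗ f).index = g.index + f.index :=
  have := hf.finiteDimensional_ker; have := hf.finiteDimensional_coker
  have := hg.finiteDimensional_ker; have := hg.finiteDimensional_coker
  LinearMap.index_comp g

theorem IsAlgFredholm.of_comp_of_comp {f : M →ₗ[k] N} {g : N →ₗ[k] M}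
    (hgf : (g ∘ₗ f).IsAlgFredholm) (hfg : (f ∘ₗ g).IsAlgFredholm) : f.IsAlgFredholm where
  finiteDimensional_ker :=
    have := hgf.finiteDimensional_ker
    Submodule.finiteDimensional_of_le (ker_le_ker_comp f g)
  finiteDimensional_coker :=
    have := hfg.finiteDimensional_coker
    Module.Finite.of_surjective _ (factor_surjective (range_comp_le_range g f))

theorem IsAlgFredholm.equiv_add (e : M ≃ₗ[k] N) (g : M →ₗ[k] N)
    [FiniteDimensional k (range g)] : (e.toLinearMap + g).IsAlgFredholm where
  finiteDimensional_ker := by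
    refine Submodule.finiteDimensional_of_le (S₂ := (range g).map e.symm.toLinearMap) ?_
    intro x (hx : e x + g x = 0)
    exact ⟨-g x, neg_mem (mem_range_self g x),
      e.symm_apply_eq.mpr (eq_neg_of_add_eq_zero_left hx).symm⟩
  finiteDimensional_coker := by
    refine Module.Finite.of_surjective ((range (e.toLinearMap + g)).mkQ ∘ₗ (range g).subtype) ?_
    intro y
    obtain ⟨y, rfl⟩ := (range _).mkQ_surjective y
    refine ⟨⟨-g (e.symm y), neg_mem (mem_range_self _ _)⟩, (Submodule.Quotient.eq _).mpr ?_⟩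
    exact ⟨-e.symm y, by simp; abel⟩

/-- Modulo `range g`, `e + g` agrees with the isomorphism `e`; comparing the indices of the two
composites with the quotient map cancels the index of that map. -/
theorem index_equiv_add (e : M ≃ₗ[k] N) (g : M →ₗ[k] N) [FiniteDimensional k (range g)] :
    (e.toLinearMap + g).index = 0 := by
  set q := (range g).mkQ
  have hq : q.IsAlgFredholm :=
    ⟨by rw [ker_mkQ]; infer_instance, by rw [range_mkQ]; infer_instance⟩
  have he : e.toLinearMap.IsAlgFredholm :=
    ⟨by rw [LinearEquiv.ker]; infer_instance, by rw [LinearEquiv.range]; infer_instance⟩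
  have hqf : q ∘ₗ (e.toLinearMap + g) = q ∘ₗ e.toLinearMap := by
    ext x
    simp [q]
  have := (IsAlgFredholm.equiv_add e g).index_comp hq
  rw [hqf, he.index_comp hq, LinearEquiv.index_eq_zero] at this
  omega

end LinearMap

section Approximation

variable {𝕜 E F : Type*} [RCLike 𝕜] [NormedAddCommGroup E] [NormedSpace 𝕜 E]
  [NormedAddCommGroup F] [InnerProductSpace 𝕜 F]

/-- Project `K` onto the span of a finite `ε/2`-net of the image of the unit ball. -/
theorem IsCompactOperator.exists_finiteDimensional_range_norm_sub_lt {K : E →L[𝕜] F}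
    (hK : IsCompactOperator K) {ε : ℝ} (hε : 0 < ε) :
    ∃ A : E →L[𝕜] F, FiniteDimensional 𝕜 (LinearMap.range (A : E →ₗ[𝕜] F)) ∧ ‖K - A‖ < ε := by
  have hKB : TotallyBounded (K '' closedBall 0 1) :=
    (hK.isCompact_closure_image_closedBall 1).totallyBounded.subset subset_closure
  obtain ⟨t, htfin, hcov⟩ := Metric.totallyBounded_iff.mp hKB (ε / 2) (half_pos hε)
  set V := span 𝕜 t
  have : FiniteDimensional 𝕜 V := FiniteDimensional.span_of_finite 𝕜 htfin
  refine ⟨V.starProjection ∘L K, Submodule.finiteDimensional_of_le (S₂ := V) ?_, ?_⟩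
  · rintro _ ⟨x, rfl⟩
    exact V.starProjection_apply_mem (K x)
  refine lt_of_le_of_lt (ContinuousLinearMap.opNorm_le_of_unit_norm (half_pos hε).le
    fun x hx => ?_) (half_lt_self hε)
  obtain ⟨y, hyt, hy⟩ := Set.mem_iUnion₂.mp (hcov ⟨x, by simp [hx], rfl⟩)
  calc ‖(K - V.starProjection ∘L K) x‖ = ‖K x - V.starProjection (K x)‖ := rfl
    _ ≤ ‖K x - y‖ := by
      rw [starProjection_minimal]
      exact ciInf_le ⟨0, by rintro _ ⟨z, rfl⟩; positivity⟩ (⟨y, subset_span hyt⟩ : V)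
    _ ≤ ε / 2 := (mem_ball_iff_norm.mp hy).le

end Approximation

section Compact

variable {𝕜 E : Type*} [NontriviallyNormedField 𝕜] [NormedAddCommGroup E] [NormedSpace 𝕜 E]

theorem IsCompactOperator.clm_mul {K : E →L[𝕜] E} (hK : IsCompactOperator K)
    (A : E →L[𝕜] E) : IsCompactOperator (A * K) :=
  hK.clm_comp A

theorem IsCompactOperator.mul_clm {K : E →L[𝕜] E} (hK : IsCompactOperator K)
    (A : E →L[𝕜] E) : IsCompactOperator (K * A) :=
  hK.comp_clm A

theorem isCompactOperator_of_forall_coe_apply_eq {V : Submodule 𝕜 E}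
    (hV : IsClosed (V : Set E)) {X : V →L[𝕜] V} {W : E →L[𝕜] E} (hW : IsCompactOperator W)
    (h : ∀ x : V, (X x : E) = W x) : IsCompactOperator X := by
  have hWV : ∀ x : V, (W ∘ V.subtypeL) x ∈ V := fun x => show W x ∈ V from h x ▸ (X x).2
  have hX : ⇑X = Set.codRestrict (W ∘ V.subtypeL) V hWV := funext fun x => Subtype.ext (h x)
  rw [hX]
  exact (hW.comp_clm V.subtypeL).codRestrict hWV hV

end Compact

section OneAddCompact

variable {𝕜 E : Type*} [RCLike 𝕜] [NormedAddCommGroup E] [InnerProductSpace 𝕜 E]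
  [CompleteSpace E]

theorem IsCompactOperator.exists_one_add_eq_unit_add {K : E →L[𝕜] E}
    (hK : IsCompactOperator K) : ∃ (U : (E →L[𝕜] E)ˣ) (A : E →L[𝕜] E),
      FiniteDimensional 𝕜 (LinearMap.range (A : E →ₗ[𝕜] E)) ∧ 1 + K = U + A := by
  obtain ⟨A, hA, hKA⟩ := hK.exists_finiteDimensional_range_norm_sub_lt one_pos
  refine ⟨Units.oneSub (A - K) (by rwa [norm_sub_rev]), A, hA, ?_⟩
  simp only [Units.val_oneSub]
  abel

theorem IsCompactOperator.isAlgFredholm_one_add {K : E →L[𝕜] E} (hK : IsCompactOperator K) :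
    ((1 + K : E →L[𝕜] E) : E →ₗ[𝕜] E).IsAlgFredholm := by
  obtain ⟨U, A, hA, hKUA⟩ := hK.exists_one_add_eq_unit_add
  rw [hKUA]
  exact .equiv_add (ContinuousLinearEquiv.unitsEquiv 𝕜 E U).toLinearEquiv A

theorem IsCompactOperator.index_one_add {K : E →L[𝕜] E} (hK : IsCompactOperator K) :
    ((1 + K : E →L[𝕜] E) : E →ₗ[𝕜] E).index = 0 := by
  obtain ⟨U, A, hA, hKUA⟩ := hK.exists_one_add_eq_unit_add
  rw [hKUA]
  exact LinearMap.index_equiv_add (ContinuousLinearEquiv.unitsEquiv 𝕜 E U).toLinearEquiv A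

end OneAddCompact

namespace ContinuousLinearMap

section Parametrix

variable {𝕜 E : Type*}

structure IsParametrix [NontriviallyNormedField 𝕜] [NormedAddCommGroup E] [NormedSpace 𝕜 E]
    (S T : E →L[𝕜] E) : Prop where
  isCompactOperator_left : IsCompactOperator ⇑(S * T - 1)
  isCompactOperator_right : IsCompactOperator ⇑(T * S - 1)

namespace IsParametrix

section Normed

variable [NontriviallyNormedField 𝕜] [NormedAddCommGroup E] [NormedSpace 𝕜 E]
  {S T : E →L[𝕜] E}

theorem symm (h : IsParametrix S T) : IsParametrix T S :=
  ⟨h.isCompactOperator_right, h.isCompactOperator_left⟩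

theorem mul {S' T' : E →L[𝕜] E} (h : IsParametrix S T) (h' : IsParametrix S' T') :
    IsParametrix (S' * S) (T * T') := by
  constructor
  · have : S' * S * (T * T') - 1 = S' * (S * T - 1) * T' + (S' * T' - 1) := by noncomm_ring
    rw [this]
    exact ((h.isCompactOperator_left.clm_mul S').mul_clm T').add h'.isCompactOperator_left
  · have : T * T' * (S' * S) - 1 = T * (T' * S' - 1) * S + (T * S - 1) := by noncomm_ring
    rw [this]
    exact ((h'.isCompactOperator_right.clm_mul T).mul_clm S).add h.isCompactOperator_right

theorem of_isCompactOperator_sub {T' : E →L[𝕜] E} (h : IsParametrix S T)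
    (hT : IsCompactOperator (T - T')) : IsParametrix S T' := by
  constructor
  · have : S * T' - 1 = S * T - 1 - S * (T - T') := by noncomm_ring
    rw [this]
    exact h.isCompactOperator_left.sub (hT.clm_mul S)
  · have : T' * S - 1 = T * S - 1 - (T - T') * S := by noncomm_ring
    rw [this]
    exact h.isCompactOperator_right.sub (hT.mul_clm S)

end Normed

variable [RCLike 𝕜] [NormedAddCommGroup E] [InnerProductSpace 𝕜 E] [CompleteSpace E]
  {S T : E →L[𝕜] E}

theorem isAlgFredholm (h : IsParametrix S T) : (T : E →ₗ[𝕜] E).IsAlgFredholm := by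
  have hST := h.isCompactOperator_left.isAlgFredholm_one_add
  have hTS := h.isCompactOperator_right.isAlgFredholm_one_add
  rw [add_sub_cancel] at hST hTS
  exact .of_comp_of_comp (g := S) hST hTS

theorem index_add_eq_zero (h : IsParametrix S T) :
    (S : E →ₗ[𝕜] E).index + (T : E →ₗ[𝕜] E).index = 0 := by
  have := h.isCompactOperator_left.index_one_add
  rw [add_sub_cancel, toLinearMap_mul, Module.End.mul_eq_comp,
    h.isAlgFredholm.index_comp h.symm.isAlgFredholm] at this
  exact this

theorem index_eq_of_isCompactOperator_sub {T' : E →L[𝕜] E} (h : IsParametrix S T)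
    (hT : IsCompactOperator (T - T')) :
    (T' : E →ₗ[𝕜] E).index = (T : E →ₗ[𝕜] E).index := by
  have := (h.of_isCompactOperator_sub hT).index_add_eq_zero
  have := h.index_add_eq_zero
  omega

theorem index_mul {S' T' : E →L[𝕜] E} (h : IsParametrix S T) (h' : IsParametrix S' T') :
    ((T * T' : E →L[𝕜] E) : E →ₗ[𝕜] E).index =
      (T : E →ₗ[𝕜] E).index + (T' : E →ₗ[𝕜] E).index := by
  rw [toLinearMap_mul, Module.End.mul_eq_comp]
  exact h'.isAlgFredholm.index_comp h.isAlgFredholm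

end IsParametrix

end Parametrix

end ContinuousLinearMap

theorem ContinuousLinearMap.IsIdempotentElem.apply_coe_range {R M : Type*} [Semiring R]
    [TopologicalSpace M] [AddCommMonoid M] [Module R M] {P : M →L[R] M} (hP : IsIdempotentElem P)
    (x : LinearMap.range (P : M →ₗ[R] M)) : P x = x :=
  (LinearMap.IsIdempotentElem.mem_range_iff hP.toLinearMap).mp x.2

section Toeplitz

variable {H : Type*} [NormedAddCommGroup H] [InnerProductSpace ℂ H] [CompleteSpace H]

theorem isCompactOperator_mul_conj_sub {P g h : H →L[ℂ] H}
    (hg : IsCompactOperator ⇑(g * P * star g - P))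
    (hh : IsCompactOperator ⇑(h * P * star h - P)) :
    IsCompactOperator ⇑((g * h) * P * star (g * h) - P) := by
  have : (g * h) * P * star (g * h) - P =
      g * (h * P * star h - P) * star g + (g * P * star g - P) := by
    rw [star_mul]; noncomm_ring
  rw [this]
  exact ((hh.clm_mul g).mul_clm (star g)).add hg

theorem isCompactOperator_commutator_of_mem_unitary {P u : H →L[ℂ] H}
    (hu : u ∈ unitary (H →L[ℂ] H)) (hc : IsCompactOperator ⇑(u * P * star u - P)) :
    IsCompactOperator ⇑(P * u - u * P) := by
  have : P * u - u * P = -((u * P * star u - P) * u) := by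
    rw [sub_mul, mul_assoc, mul_assoc, Unitary.star_mul_self_of_mem hu]; noncomm_ring
  rw [this]
  exact (hc.mul_clm u).neg

theorem isCompactOperator_commutator_star_of_mem_unitary {P u : H →L[ℂ] H}
    (hu : u ∈ unitary (H →L[ℂ] H)) (hc : IsCompactOperator ⇑(P * u - u * P)) :
    IsCompactOperator ⇑(P * star u - star u * P) := by
  have : P * star u - star u * P = -(star u * (P * u - u * P) * star u) := by
    have h1 := Unitary.star_mul_self_of_mem hu
    have h2 := Unitary.mul_star_self_of_mem hu
    calc P * star u - star u * P = star u * u * P * star u - star u * P * (u * star u) := by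
          rw [h1, h2]; noncomm_ring
      _ = _ := by noncomm_ring
  rw [this]
  exact ((hc.clm_mul (star u)).mul_clm (star u)).neg

variable {P : H →L[ℂ] H}

@[simp]
theorem coe_toeplitzOp_apply (a : H →L[ℂ] H) (x : LinearMap.range (P : H →ₗ[ℂ] H)) :
    (toeplitzOp P a x : H) = P (a x) :=
  rfl

theorem toeplitzOp_one (hP : IsIdempotentElem P) : toeplitzOp P 1 = 1 := by
  ext x
  exact hP.apply_coe_range x

theorem isCompactOperator_toeplitzOp_mul_sub (hP : IsIdempotentElem P) (a : H →L[ℂ] H)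
    {b : H →L[ℂ] H} (hb : IsCompactOperator ⇑(P * b - b * P)) :
    IsCompactOperator ⇑(toeplitzOp P a * toeplitzOp P b - toeplitzOp P (a * b)) := by
  refine isCompactOperator_of_forall_coe_apply_eq hP.isClosed_range (hb.clm_mul (P * a))
    fun x => ?_
  simp [hP.apply_coe_range x]

theorem isParametrix_toeplitzOp_star (hP : IsIdempotentElem P) {u : H →L[ℂ] H}
    (hu : u ∈ unitary (H →L[ℂ] H)) (hc : IsCompactOperator ⇑(u * P * star u - P)) :
    IsParametrix (toeplitzOp P (star u)) (toeplitzOp P u) := by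
  have hcu := isCompactOperator_commutator_of_mem_unitary hu hc
  have hcu' := isCompactOperator_commutator_star_of_mem_unitary hu hcu
  constructor
  · simpa [Unitary.star_mul_self_of_mem hu, toeplitzOp_one hP] using
      isCompactOperator_toeplitzOp_mul_sub hP (star u) hcu
  · simpa [Unitary.mul_star_self_of_mem hu, toeplitzOp_one hP] using
      isCompactOperator_toeplitzOp_mul_sub hP u hcu'

end Toeplitz

theorem toeplitz_index_additive_general {H : Type*} [NormedAddCommGroup H]
    [InnerProductSpace ℂ H] [CompleteSpace H]
    (P g h : H →L[ℂ] H) (hPidem : P.comp P = P)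
    (hg : g ∈ unitary (H →L[ℂ] H)) (hh : h ∈ unitary (H →L[ℂ] H))
    (hgc : IsCompactOperator ⇑(g * P * star g - P))
    (hhc : IsCompactOperator ⇑(h * P * star h - P)) :
    IsCompactOperator ⇑((g * h) * P * star (g * h) - P) ∧
    fredholmIndex (toeplitzOp P (g * h))
      = fredholmIndex (toeplitzOp P g) + fredholmIndex (toeplitzOp P h) := by
  have hP : IsIdempotentElem P := hPidem
  have : CompleteSpace (LinearMap.range (P : H →ₗ[ℂ] H)) := hP.isClosed_range.completeSpace_coe
  have hTg := isParametrix_toeplitzOp_star hP hg hgc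
  have hTh := isParametrix_toeplitzOp_star hP hh hhc
  have hTgh : IsCompactOperator ⇑(toeplitzOp P g * toeplitzOp P h - toeplitzOp P (g * h)) :=
    isCompactOperator_toeplitzOp_mul_sub hP g (isCompactOperator_commutator_of_mem_unitary hh hhc)
  exact ⟨isCompactOperator_mul_conj_sub hgc hhc,
    ((hTg.mul hTh).index_eq_of_isCompactOperator_sub hTgh).trans (hTg.index_mul hTh)⟩

/-- Logarithmic property of the Toeplitz index: if `P` is an orthogonal projection and
`g`, `h` are unitaries with `gPg⁻¹ - P` and `hPh⁻¹ - P` compact, then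
`(gh)P(gh)⁻¹ - P` is compact and
`ind (P(gh)P) = ind (PgP) + ind (PhP)` on `im P`. -/
theorem toeplitz_index_additive {H : Type*} [NormedAddCommGroup H]
    [InnerProductSpace ℂ H] [CompleteSpace H]
    (P g h : H →L[ℂ] H) (hPsa : IsSelfAdjoint P) (hPidem : P.comp P = P)
    (hg : g ∈ unitary (H →L[ℂ] H)) (hh : h ∈ unitary (H →L[ℂ] H))
    (hgc : IsCompactOperator ⇑(g * P * star g - P))
    (hhc : IsCompactOperator ⇑(h * P * star h - P)) :
    IsCompactOperator ⇑((g * h) * P * star (g * h) - P) ∧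
    fredholmIndex (toeplitzOp P (g * h))
      = fredholmIndex (toeplitzOp P g) + fredholmIndex (toeplitzOp P h) :=
  toeplitz_index_additive_general P g h hPidem hg hh hgc hhc
end
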